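/- arXiv:1003.4799 — 3 statements merged into one kernel-verified Lean document; each statement's English description precedes it below -/
import Mathlib

section
/- Error-rule (2) of Figure 4 is sound under no multiple inheritance: if a constraint set contains s1^{g1} <:_s α and s2^{g2} <:_s α, and there is no sort s with s1^{g1} <:_s s^? ∈ Γ and s2^{g2} <:_s s^? ∈ Γ, then the constraint set is unsatisfiable. -/
inductive Ty (S F V : Type) where
  | tvar : V → Ty S F V
  | sort : S → Option F → Ty S F V
  | wt : Ty S F V

inductive Constr (S F V : Type) where
  | eq : Ty S F V → Ty S F V → Constr S F V
  | sub : Ty S F V → Ty S F V → Constr S F V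

/-- Decorated-sort subtyping: `s1^{g1} <:_s s2^{g2}` iff `s1 <: s2` and
(`g1 = g2` or `g2 = ?`), where `sub` is the (reflexive-transitive) subtyping
relation on sorts declared by the context `Γ`. -/
def dsub (sub : S → S → Prop) : Ty S F V → Ty S F V → Prop
  | .sort s1 g1, .sort s2 g2 => sub s1 s2 ∧ (g1 = g2 ∨ g2 = none)
  | _, _ => False

def applyTy (σ : V → Ty S F V) : Ty S F V → Ty S F V
  | .tvar a => σ a
  | .sort s g => .sort s g
  | .wt => .wt

/-- `σ` satisfies `τ1 =_s τ2` iff `στ1 = στ2`, and `τ1 <:_s τ2` iff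
`στ1 <:_s στ2`. -/
def SatC (sub : S → S → Prop) (σ : V → Ty S F V) : Constr S F V → Prop
  | .eq t1 t2 => applyTy σ t1 = applyTy σ t2
  | .sub t1 t2 => dsub sub (applyTy σ t1) (applyTy σ t2)

/-- Soundness of error-rule (2) of Figure 4 under no multiple inheritance:
if a constraint set contains `s1^{g1} <:_s α` and `s2^{g2} <:_s α`, and
there is no sort `s` with `s1^{g1} <:_s s^? ∈ Γ` and `s2^{g2} <:_s s^? ∈ Γ`,
then the constraint set is unsatisfiable. -/
theorem error_rule_2_sound {S F V : Type} (sub : S → S → Prop)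
    (hrefl : ∀ s, sub s s)
    (htrans : ∀ {s1 s2 s3}, sub s1 s2 → sub s2 s3 → sub s1 s3)
    (hchain : ∀ {s t1 t2}, sub s t1 → sub s t2 → sub t1 t2 ∨ sub t2 t1)
    (a : V) (s1 s2 : S) (g1 g2 : Option F) (C' : Set (Constr S F V))
    (hno : ¬ ∃ s : S, dsub sub (Ty.sort s1 g1 : Ty S F V) (.sort s none) ∧
      dsub sub (Ty.sort s2 g2 : Ty S F V) (.sort s none)) :
    ¬ ∃ σ : V → Ty S F V,
      ∀ c ∈ insert (Constr.sub (.sort s1 g1) (.tvar a))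
              (insert (Constr.sub (.sort s2 g2) (.tvar a)) C'),
        SatC sub σ c := by
  rintro ⟨σ, hσ⟩
  have h1 := hσ _ (Set.mem_insert _ _)
  have h2 := hσ _ (Set.mem_insert_of_mem _ (Set.mem_insert _ _))
  simp only [SatC, applyTy] at h1 h2
  cases hσa : σ a with
  | tvar b => rw [hσa] at h1; exact h1
  | wt => rw [hσa] at h1; exact h1
  | sort t g =>
    rw [hσa] at h1 h2
    exact hno ⟨t, ⟨h1.1, Or.inr rfl⟩, ⟨h2.1, Or.inr rfl⟩⟩
end

section
/- Transitive-elimination rule (9) is sound: if σ' satisfies {α1 <:_s α2} ∪ [α ↦ α2]C', then the substitution σ = σ' ∪ {α ↦ σ'α2} satisfies {α1 <:_s α, α <:_s α2} ∪ C', provided α does not occur in α1, α2. -/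
variable {S F V : Type} [DecidableEq V]

/-- The singleton substitution `[α ↦ τ]`. -/
def sub1 (a : V) (τ : Ty S F V) : V → Ty S F V :=
  fun v => if v = a then τ else .tvar v

def mapC (σ : V → Ty S F V) : Constr S F V → Constr S F V
  | .eq t1 t2 => .eq (applyTy σ t1) (applyTy σ t2)
  | .sub t1 t2 => .sub (applyTy σ t1) (applyTy σ t2)

/-- Satisfaction with respect to an arbitrary preorder `r` (`<:_s`) on
types: `σ` satisfies `τ1 <:_s τ2` iff `r (στ1) (στ2)`, and `τ1 =_s τ2` iff
`στ1 = στ2`. -/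
def SatR (r : Ty S F V → Ty S F V → Prop) (σ : V → Ty S F V) :
    Constr S F V → Prop
  | .eq t1 t2 => applyTy σ t1 = applyTy σ t2
  | .sub t1 t2 => r (applyTy σ t1) (applyTy σ t2)

/-- Soundness of the transitive-elimination rule (9): if `σ'` satisfies
`{α1 <:_s α2} ∪ [α ↦ α2]C'`, then `σ = σ' ∪ {α ↦ σ'α2}` satisfies
`{α1 <:_s α, α <:_s α2} ∪ C'`, provided `α` does not occur in `α1, α2`. -/
theorem rule_9_sound (r : Ty S F V → Ty S F V → Prop)
    (hrefl : ∀ t, r t t) (htrans : ∀ {t1 t2 t3}, r t1 t2 → r t2 t3 → r t1 t3)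
    (a a1 a2 : V) (ha1 : a ≠ a1) (ha2 : a ≠ a2)
    (C' : Set (Constr S F V)) (σ' : V → Ty S F V)
    (h : ∀ c ∈ insert (Constr.sub (.tvar a1) (.tvar a2))
            ((mapC (sub1 a (.tvar a2))) '' C'),
        SatR r σ' c) :
    ∀ c ∈ insert (Constr.sub (.tvar a1) (.tvar a))
            (insert (Constr.sub (.tvar a) (.tvar a2)) C'),
      SatR r (fun v => if v = a then applyTy σ' (.tvar a2) else σ' v) c := by

  intro c hc
  have key : ∀ t : Ty S F V,
      applyTy (fun v => if v = a then applyTy σ' (.tvar a2) else σ' v) t =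
      applyTy σ' (applyTy (sub1 a (.tvar a2)) t) := by
    intro t
    cases t with
    | tvar v =>
        by_cases hv : v = a <;> simp [applyTy, sub1, hv]
    | sort s g => rfl
    | wt => rfl
  rcases hc with rfl | rfl | hc
  · have h1 := h _ (Set.mem_insert _ _)
    simpa [SatR, applyTy, ha1.symm] using h1
  · simp [SatR, applyTy]
    exact hrefl _
  · have h2 := h _ (Set.mem_insert_of_mem _ (Set.mem_image_of_mem _ hc))
    cases c with
    | eq t1 t2 =>
        simp only [SatR, mapC, key] at *
        exact h2
    | sub t1 t2 =>
        simp only [SatR, mapC, key] at *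
        exact h2
end

section
/- Substitution elimination is correct: applying rule (4), which transforms ({α =_s τ} ∪ C', σ) into ([α ↦ τ]C', {α ↦ τ} ∪ σ), preserves the solutions: a substitution θ satisfies {α =_s τ} ∪ C' if and only if θα = θτ and θ satisfies [α ↦ τ]C', provided α does not occur in τ. -/
variable {S F V : Type} [DecidableEq V]

/-- Correctness of substitution elimination (rule (4)): provided `α` does not
occur in `τ`, a substitution `θ` satisfies `{α =_s τ} ∪ C'` iff `θα = θτ`
and `θ` satisfies `[α ↦ τ]C'`. -/
theorem rule_4_correct (sub : S → S → Prop)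
    (a : V) (τ : Ty S F V) (hocc : τ ≠ .tvar a)
    (C' : Set (Constr S F V)) (θ : V → Ty S F V) :
    (∀ c ∈ insert (Constr.eq (.tvar a) τ) C', SatC sub θ c) ↔
    (applyTy θ (.tvar a) = applyTy θ τ ∧
      ∀ c ∈ (mapC (sub1 a τ)) '' C', SatC sub θ c) := by
  have key : applyTy θ (Ty.tvar a) = applyTy θ τ →
      ∀ t : Ty S F V, applyTy θ (applyTy (sub1 a τ) t) = applyTy θ t := by
    intro h t
    cases t with
    | tvar v =>
      by_cases hv : v = a
      · subst hv; show applyTy θ ((sub1 v τ) v) = θ v; simp only [sub1, if_pos rfl]; exact h.symm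
      · simp [applyTy, sub1, hv]
    | sort s g => simp [applyTy]
    | wt => simp [applyTy]
  constructor
  · intro h
    have ha : applyTy θ (Ty.tvar a) = applyTy θ τ := h _ (Set.mem_insert _ _)
    refine ⟨ha, ?_⟩
    rintro c ⟨c', hc', rfl⟩
    have := h c' (Set.mem_insert_of_mem _ hc')
    cases c' with
    | eq t1 t2 => simpa [SatC, mapC, key ha] using this
    | sub t1 t2 => simpa [SatC, mapC, key ha] using this
  · rintro ⟨ha, h⟩ c hc
    rcases Set.mem_insert_iff.mp hc with rfl | hc
    · exact ha
    · have := h _ (Set.mem_image_of_mem _ hc)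
      cases c with
      | eq t1 t2 => simpa [SatC, mapC, key ha] using this
      | sub t1 t2 => simpa [SatC, mapC, key ha] using this
end
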